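/- Mismatched packing lemma: Let (X,Y) ∼ p_{X,Y} on finite alphabets and p̃_X a pmf on 𝒳 with D(p_X||p̃_X) < ∞. Let Ỹ^n be an arbitrary random sequence, and let X̃^n(m), m ∈ C with |C| ≤ 2^{nR}, each be distributed i.i.d. ∼ p̃_X and pairwise independent of Ỹ^n (but arbitrarily dependent among themselves). If R < I(X;Y) + D(p_X||p̃_X) − δ(ε), then P{(X̃^n(m), Ỹ^n) ∈ T_ε^(n)(X,Y) for some m ∈ C} → 0 as n → ∞. -/

import Mathlib

/-!
Write `d(x,y) = log₂ (p(x,y) / (p̃(x) p_Y(y)))`, whose `p`-mean is `I(X;Y) + D(p_X‖p̃)`.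
Wherever `p(x,y) > 0` we have `p̃(x) = p(x|y) 2^{-d(x,y)}`, and along a jointly `ε`-typical
pair of sequences `∑ᵢ d(xᵢ,yᵢ) ≥ n (E_p d - ε E_p |d|)`. Hence the `p̃`-probability of the
sequences `xⁿ` typical with a fixed `yⁿ` is at most
`2^{-n (E_p d - ε E_p |d|)} ∑_{xⁿ} ∏ᵢ p(xᵢ|yᵢ) ≤ 2^{-n (E_p d - ε E_p |d|)}`.
Averaging over `Ỹⁿ` (independent of each codeword) and a union bound over the `2^{nR}`
codewords give the bound `2^{n (R - E_p d + ε E_p |d|)}`, which tends to `0`; so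
`δ(ε) = ε E_p |d|` works.
-/

open Finset Real Filter Topology MeasureTheory
open scoped ENNReal

def IsTypical {α : Type*} [DecidableEq α] (p : α → ℝ) (ε : ℝ) {n : ℕ} (w : Fin n → α) :
    Prop :=
  ∀ z, |(#{i | w i = z} : ℝ) / n - p z| ≤ ε * p z

namespace IsTypical

variable {α : Type*} [DecidableEq α] {p : α → ℝ} {ε : ℝ} {n : ℕ} {w : Fin n → α}

theorem abs_card_sub_le (h : IsTypical p ε w) (z : α) :
    |(#{i | w i = z} : ℝ) - n * p z| ≤ n * (ε * p z) := by
  rcases n.eq_zero_or_pos with rfl | hn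
  · simp
  have hn' : (0 : ℝ) < n := by exact_mod_cast hn
  have hfactor : (#{i | w i = z} : ℝ) - n * p z = n * ((#{i | w i = z} : ℝ) / n - p z) := by
    field_simp
  rw [hfactor, abs_mul, abs_of_pos hn']
  exact mul_le_mul_of_nonneg_left (h z) hn'.le

theorem pos (h : IsTypical p ε w) (hε : 0 ≤ ε) (i : Fin n) : 0 < p (w i) := by
  by_contra! hp
  have hcard : (1 : ℝ) ≤ #{j | w j = w i} := by
    exact_mod_cast card_pos.mpr ⟨i, by simp⟩
  have hnp : (n : ℝ) * p (w i) ≤ 0 := mul_nonpos_of_nonneg_of_nonpos n.cast_nonneg hp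
  have hnεp : (n : ℝ) * (ε * p (w i)) ≤ 0 :=
    mul_nonpos_of_nonneg_of_nonpos n.cast_nonneg (mul_nonpos_of_nonneg_of_nonpos hε hp)
  linarith [le_abs_self ((#{j | w j = w i} : ℝ) - n * p (w i)), h.abs_card_sub_le (w i)]

theorem mul_sub_le_sum [Fintype α] (h : IsTypical p ε w) (f : α → ℝ) :
    n * (∑ z, p z * f z - ε * ∑ z, p z * |f z|) ≤ ∑ i, f (w i) := by
  have hfiber : ∑ i, f (w i) = ∑ z, (#{i | w i = z} : ℝ) * f z := by
    rw [← sum_fiberwise univ w]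
    refine sum_congr rfl fun z _ => ?_
    rw [sum_congr rfl fun i hi => by rw [(mem_filter.mp hi).2], sum_const, nsmul_eq_mul]
  rw [hfiber, mul_sub, mul_sum, mul_sum, mul_sum, ← sum_sub_distrib]
  refine sum_le_sum fun z _ => ?_
  have hdev := h.abs_card_sub_le z
  have hprod := neg_abs_le (((#{i | w i = z} : ℝ) - n * p z) * f z)
  rw [abs_mul] at hprod
  nlinarith [abs_nonneg (f z)]

end IsTypical

section Packing

variable {X Y : Type*} [Fintype X] {p : X × Y → ℝ} {ptil : X → ℝ}

/-- `p(x|y)`; it is `0` (not a pmf in `x`) when the marginal `p_Y(y)` vanishes. -/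
noncomputable def condProb (p : X × Y → ℝ) (x : X) (y : Y) : ℝ :=
  p (x, y) / ∑ x', p (x', y)

theorem condProb_nonneg (hp0 : ∀ z, 0 ≤ p z) (x : X) (y : Y) : 0 ≤ condProb p x y :=
  div_nonneg (hp0 _) (sum_nonneg fun _ _ => hp0 _)

theorem sum_prod_condProb_le_one [Fintype Y] (hp0 : ∀ z, 0 ≤ p z) {n : ℕ} (ys : Fin n → Y) :
    ∑ xs : Fin n → X, ∏ i, condProb p (xs i) (ys i) ≤ 1 := by
  classical
  rw [← Fintype.prod_sum fun i x => condProb p x (ys i)]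
  refine prod_le_one (fun i _ => sum_nonneg fun x _ => condProb_nonneg hp0 x (ys i))
    fun i _ => ?_
  simp_rw [condProb, ← sum_div]
  exact div_self_le_one _

noncomputable def mismatchedDensity (p : X × Y → ℝ) (ptil : X → ℝ) (z : X × Y) : ℝ :=
  logb 2 (p z / (ptil z.1 * ∑ x, p (x, z.2)))

theorem mismatchedDensity_eq_add [Fintype Y] {z : X × Y} (hz : 0 < p z) (hX : 0 < ∑ y, p (z.1, y))
    (hY : 0 < ∑ x, p (x, z.2)) (hptil : ptil z.1 ≠ 0) :
    mismatchedDensity p ptil z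
      = logb 2 (p z / ((∑ y, p (z.1, y)) * ∑ x, p (x, z.2)))
        + logb 2 ((∑ y, p (z.1, y)) / ptil z.1) := by
  rw [mismatchedDensity, ← logb_mul (by positivity) (div_ne_zero hX.ne' hptil)]
  congr 1
  field_simp

theorem sum_mul_mismatchedDensity [Fintype Y] (hp0 : ∀ z, 0 ≤ p z)
    (habs : ∀ x, (∑ y, p (x, y)) ≠ 0 → ptil x ≠ 0) :
    ∑ z, p z * mismatchedDensity p ptil z
      = (∑ z : X × Y, p z * logb 2 (p z / ((∑ y, p (z.1, y)) * (∑ x, p (x, z.2)))))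
        + ∑ x, (∑ y, p (x, y)) * logb 2 ((∑ y, p (x, y)) / ptil x) := by
  have hD : ∑ x, (∑ y, p (x, y)) * logb 2 ((∑ y, p (x, y)) / ptil x)
      = ∑ z : X × Y, p z * logb 2 ((∑ y, p (z.1, y)) / ptil z.1) := by
    rw [Fintype.sum_prod_type]
    exact sum_congr rfl fun x _ => sum_mul _ _ _
  rw [hD, ← sum_add_distrib]
  refine sum_congr rfl fun z _ => ?_
  rcases (hp0 z).eq_or_lt with hz | hz
  · simp [← hz]
  have hX : 0 < ∑ y, p (z.1, y) := sum_pos' (fun _ _ => hp0 _) ⟨z.2, mem_univ _, hz⟩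
  have hY : 0 < ∑ x, p (x, z.2) := sum_pos' (fun _ _ => hp0 _) ⟨z.1, mem_univ _, hz⟩
  rw [mismatchedDensity_eq_add hz hX hY (habs _ hX.ne'), mul_add]

theorem eq_condProb_mul_rpow_neg_mismatchedDensity (hp0 : ∀ z, 0 ≤ p z) {x : X} {y : Y}
    (hxy : 0 < p (x, y)) (hx : 0 < ptil x) :
    ptil x = condProb p x y * 2 ^ (-mismatchedDensity p ptil (x, y)) := by
  have hy : 0 < ∑ x', p (x', y) := sum_pos' (fun _ _ => hp0 _) ⟨x, mem_univ _, hxy⟩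
  rw [rpow_neg zero_le_two, mismatchedDensity, rpow_logb two_pos one_lt_two.ne' (by positivity),
    condProb]
  field_simp

theorem prod_le_of_isTypical [Fintype Y] [DecidableEq X] [DecidableEq Y] (hp0 : ∀ z, 0 ≤ p z)
    (hpt0 : ∀ x, 0 ≤ ptil x) (habs : ∀ x, (∑ y, p (x, y)) ≠ 0 → ptil x ≠ 0) {ε : ℝ} (hε : 0 ≤ ε)
    {n : ℕ} {xs : Fin n → X} {ys : Fin n → Y} (h : IsTypical p ε fun i => (xs i, ys i)) :
    ∏ i, ptil (xs i) ≤
      2 ^ (-(n * (∑ z, p z * mismatchedDensity p ptil z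
        - ε * ∑ z, p z * |mismatchedDensity p ptil z|))) * ∏ i, condProb p (xs i) (ys i) := by
  set d := mismatchedDensity p ptil
  have hptil : ∀ i, 0 < ptil (xs i) := fun i =>
    (hpt0 _).lt_of_ne' <| habs _ (sum_pos' (fun _ _ => hp0 _) ⟨ys i, mem_univ _, h.pos hε i⟩).ne'
  calc ∏ i, ptil (xs i) = ∏ i, condProb p (xs i) (ys i) * 2 ^ (-d (xs i, ys i)) :=
        prod_congr rfl fun i _ =>
          eq_condProb_mul_rpow_neg_mismatchedDensity hp0 (h.pos hε i) (hptil i)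
    _ = 2 ^ (-∑ i, d (xs i, ys i)) * ∏ i, condProb p (xs i) (ys i) := by
        rw [prod_mul_distrib, ← rpow_sum_of_pos two_pos, sum_neg_distrib, mul_comm]
    _ ≤ _ := by
        gcongr
        · exact prod_nonneg fun i _ => condProb_nonneg hp0 _ _
        · exact one_le_two
        · exact h.mul_sub_le_sum d

end Packing

theorem PMF.sum_toOuterMeasure_fiber {Ω β : Type*} [Fintype β] (μ : PMF Ω) (V : Ω → β) :
    ∑ b, μ.toOuterMeasure {ω | V ω = b} = 1 := by
  simp_rw [← μ.map V |>.tsum_coe, tsum_fintype, ← PMF.toOuterMeasure_apply_singleton,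
    PMF.toOuterMeasure_map_apply]
  rfl

theorem PMF.toOuterMeasure_setOf_rel_le {Ω α β : Type*} [Fintype α] [Fintype β] (μ : PMF Ω)
    (U : Ω → α) (V : Ω → β) (T : α → β → Prop) (f : α → β → ℝ≥0∞) (c : ℝ≥0∞)
    (hindep : ∀ a b, μ.toOuterMeasure {ω | U ω = a ∧ V ω = b}
      = μ.toOuterMeasure {ω | U ω = a} * μ.toOuterMeasure {ω | V ω = b})
    (hU : ∀ a b, T a b → μ.toOuterMeasure {ω | U ω = a} ≤ f a b) (hf : ∀ b, ∑ a, f a b ≤ c) :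
    μ.toOuterMeasure {ω | T (U ω) (V ω)} ≤ c := by
  classical
  calc μ.toOuterMeasure {ω | T (U ω) (V ω)}
      ≤ ∑ ab : α × β, μ.toOuterMeasure {ω | (U ω = ab.1 ∧ V ω = ab.2) ∧ T ab.1 ab.2} := by
        refine (measure_mono fun ω hω => ?_).trans (measure_iUnion_fintype_le _ _)
        exact Set.mem_iUnion.mpr ⟨(U ω, V ω), ⟨rfl, rfl⟩, hω⟩
    _ ≤ ∑ ab : α × β, f ab.1 ab.2 * μ.toOuterMeasure {ω | V ω = ab.2} := by
        refine sum_le_sum fun ab _ => ?_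
        by_cases hT : T ab.1 ab.2
        · simp only [hT, and_true]
          rw [hindep]
          gcongr
          exact hU _ _ hT
        · simp [hT]
    _ = ∑ b, (∑ a, f a b) * μ.toOuterMeasure {ω | V ω = b} := by
        simp_rw [Fintype.sum_prod_type_right, sum_mul]
    _ ≤ ∑ b, c * μ.toOuterMeasure {ω | V ω = b} := by
        gcongr with b
        exact hf b
    _ = c := by rw [← mul_sum, μ.sum_toOuterMeasure_fiber, mul_one]

theorem toOuterMeasure_isTypical_le {Ω X Y : Type*} [Fintype X] [Fintype Y] [DecidableEq X]
    [DecidableEq Y] {p : X × Y → ℝ} {ptil : X → ℝ} (hp0 : ∀ z, 0 ≤ p z)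
    (hpt0 : ∀ x, 0 ≤ ptil x) (habs : ∀ x, (∑ y, p (x, y)) ≠ 0 → ptil x ≠ 0) {ε : ℝ} (hε : 0 ≤ ε)
    {n : ℕ} (μ : PMF Ω) (U : Ω → Fin n → X) (V : Ω → Fin n → Y)
    (hmarg : ∀ xs, μ.toOuterMeasure {ω | U ω = xs} = ENNReal.ofReal (∏ i, ptil (xs i)))
    (hindep : ∀ xs ys, μ.toOuterMeasure {ω | U ω = xs ∧ V ω = ys}
      = μ.toOuterMeasure {ω | U ω = xs} * μ.toOuterMeasure {ω | V ω = ys}) :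
    μ.toOuterMeasure {ω | IsTypical p ε fun i => (U ω i, V ω i)} ≤
      ENNReal.ofReal (2 ^ (-(n * (∑ z, p z * mismatchedDensity p ptil z
        - ε * ∑ z, p z * |mismatchedDensity p ptil z|)))) := by
  set B : ℝ := 2 ^ (-(n * (∑ z, p z * mismatchedDensity p ptil z
    - ε * ∑ z, p z * |mismatchedDensity p ptil z|)))
  have hB : 0 ≤ B := rpow_nonneg zero_le_two _
  refine μ.toOuterMeasure_setOf_rel_le U V (fun xs ys => IsTypical p ε fun i => (xs i, ys i))
    (fun xs ys => ENNReal.ofReal (B * ∏ i, condProb p (xs i) (ys i))) _ hindep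
    (fun xs ys h => ?_) fun ys => ?_
  · rw [hmarg]
    exact ENNReal.ofReal_le_ofReal (prod_le_of_isTypical hp0 hpt0 habs hε h)
  · rw [← ENNReal.ofReal_sum_of_nonneg fun xs _ =>
      mul_nonneg hB (prod_nonneg fun i _ => condProb_nonneg hp0 _ _), ← mul_sum]
    exact ENNReal.ofReal_le_ofReal (mul_le_of_le_one_right hB (sum_prod_condProb_le_one hp0 ys))

theorem tendsto_ofReal_two_rpow_natCast_mul {a : ℝ} (ha : a < 0) :
    Tendsto (fun n : ℕ => ENNReal.ofReal (2 ^ ((n : ℝ) * a))) atTop (𝓝 0) := by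
  have hpow : Tendsto (fun n : ℕ => ((2 : ℝ) ^ a) ^ n) atTop (𝓝 0) :=
    tendsto_pow_atTop_nhds_zero_of_lt_one (by positivity)
      (rpow_lt_one_of_one_lt_of_neg one_lt_two ha)
  simpa [← rpow_natCast, ← rpow_mul zero_le_two, mul_comm a] using ENNReal.tendsto_ofReal hpow

theorem stmt_14 {X Y : Type} [Fintype X] [Fintype Y] [DecidableEq X] [DecidableEq Y]
    (p : X × Y → ℝ) (hp0 : ∀ z, 0 ≤ p z)
    (ptil : X → ℝ) (hpt0 : ∀ x, 0 ≤ ptil x)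
    (habs : ∀ x, (∑ y, p (x, y)) ≠ 0 → ptil x ≠ 0) :
    ∃ δ : ℝ → ℝ,
      Filter.Tendsto δ (nhdsWithin 0 (Set.Ioi 0)) (nhds 0) ∧
      ∀ ε ∈ Set.Ioo (0:ℝ) 1, ∀ R : ℝ,
        R < (∑ z : X × Y, p z * Real.logb 2
                (p z / ((∑ y, p (z.1, y)) * (∑ x, p (x, z.2)))))
            + (∑ x, (∑ y, p (x, y)) * Real.logb 2 ((∑ y, p (x, y)) / ptil x))
            - δ ε →
        ∀ (Ω : ℕ → Type) (μ : (n : ℕ) → PMF (Ω n)) (M : ℕ → ℕ)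
          (Xc : (n : ℕ) → Ω n → Fin (M n) → Fin n → X)
          (Yc : (n : ℕ) → Ω n → Fin n → Y),
          (∀ n, (M n : ℝ) ≤ (2:ℝ) ^ ((n:ℝ) * R)) →
          (∀ n (m : Fin (M n)) (xs : Fin n → X),
            (μ n).toOuterMeasure {ω | Xc n ω m = xs}
              = ENNReal.ofReal (∏ i, ptil (xs i))) →
          (∀ n (m : Fin (M n)) (xs : Fin n → X) (ys : Fin n → Y),
            (μ n).toOuterMeasure {ω | Xc n ω m = xs ∧ Yc n ω = ys}
              = (μ n).toOuterMeasure {ω | Xc n ω m = xs} *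
                (μ n).toOuterMeasure {ω | Yc n ω = ys}) →
          Filter.Tendsto
            (fun n => (μ n).toOuterMeasure
              {ω | ∃ m : Fin (M n), ∀ z : X × Y,
                |((Finset.univ.filter
                    (fun i : Fin n => (Xc n ω m i, Yc n ω i) = z)).card : ℝ) / n
                  - p z| ≤ ε * p z})
            Filter.atTop (nhds 0) := by
  set d := mismatchedDensity p ptil
  refine ⟨fun ε => ε * ∑ z, p z * |d z|,
    ((continuous_id.mul continuous_const).tendsto' 0 0 (zero_mul _)).mono_left nhdsWithin_le_nhds,
    ?_⟩
  rintro ε ⟨hε, -⟩ R hR Ω μ M Xc Yc hM hmarg hindep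
  rw [← sum_mul_mismatchedDensity hp0 habs] at hR
  set b := ∑ z, p z * d z - ε * ∑ z, p z * |d z|
  refine tendsto_of_tendsto_of_tendsto_of_le_of_le tendsto_const_nhds
    (tendsto_ofReal_two_rpow_natCast_mul (a := R - b) (by linarith)) (fun _ => zero_le)
    fun n => ?_
  calc (μ n).toOuterMeasure {ω | ∃ m, IsTypical p ε fun i => (Xc n ω m i, Yc n ω i)}
      ≤ ∑ m, (μ n).toOuterMeasure {ω | IsTypical p ε fun i => (Xc n ω m i, Yc n ω i)} := by
        rw [Set.ofPred_exists]
        exact measure_iUnion_fintype_le _ _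
    _ ≤ ∑ _m : Fin (M n), ENNReal.ofReal (2 ^ (-(n * b))) := by
        gcongr with m
        exact toOuterMeasure_isTypical_le hp0 hpt0 habs hε.le (μ n) (Xc n · m) (Yc n)
          (hmarg n m) (hindep n m)
    _ ≤ ENNReal.ofReal (2 ^ ((n : ℝ) * R)) * ENNReal.ofReal (2 ^ (-(n * b))) := by
        rw [sum_const, card_univ, Fintype.card_fin, nsmul_eq_mul, ← ENNReal.ofReal_natCast]
        gcongr
        exact hM n
    _ = ENNReal.ofReal (2 ^ ((n : ℝ) * (R - b))) := by
        rw [← ENNReal.ofReal_mul (by positivity), ← rpow_add two_pos]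
        ring_nf
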